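/- arXiv:1407.1701 — 4 statements merged into one kernel-verified Lean document; each statement's English description precedes it below -/
import Mathlib

section
/- Let m ≥ 2 and consider the sequence φ = (0, 0, 1, 2, ..., m-2) of elements of Z_m. A sequence α = (α_1, ..., α_k) of nonzero elements of Z_m is φ-good (i.e. there exist strictly upper-triangular matrix units r_1, ..., r_k in UT_m with the elementary grading induced by φ such that r_1 ⋯ r_k ≠ 0 and deg(r_i) = α_i) if and only if, writing μ_j for the number of indices i with α_i = j (for j = 1, ..., m-1), one has ∑_{j=1}^{m-1} μ_j · j ≤ m - 2. -/
/-!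
A product of matrix units `e_{a₁b₁} ⋯ e_{aₖbₖ}` is nonzero exactly when the units form a chain
`bᵢ = aᵢ₊₁`, so a realization of `α` is a strictly increasing path `c₀ < c₁ < ⋯ < cₖ` in
`{0, …, m-1}`. As `φ` is nondecreasing with values in `{0, …, m-2}`, each degree
`φ(cᵢ) - φ(cᵢ₋₁)` is read off in `ℕ`, the degrees telescope, and their sum `φ(cₖ) - φ(c₀)` is at
most `m - 2`. Conversely the partial sums of `α`, shifted to start at position `1`, give such a
path. Finally `∑ⱼ μⱼ j` is just `∑ᵢ αᵢ` computed in `ℕ`.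
-/

open Finset

namespace Fin

variable {M : Type*}

theorem partialSum_last [AddCommMonoid M] {k : ℕ} (v : Fin k → M) :
    partialSum v (last k) = ∑ i, v i := by
  rw [partialSum, val_last, List.take_of_length_le (by simp), List.sum_ofFn]

theorem partialSum_le_sum [AddCommMonoid M] [PartialOrder M] [IsOrderedAddMonoid M] {k : ℕ}
    {v : Fin k → M} (hv : ∀ i, 0 ≤ v i) (t : Fin (k + 1)) : partialSum v t ≤ ∑ i, v i := by
  rw [partialSum, ← List.sum_ofFn]
  exact (List.take_sublist _ _).sum_le_sum (by simpa [List.mem_ofFn] using hv)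

theorem eq_add_partialSum_of_add_eq [AddMonoid M] {k : ℕ} {f : Fin (k + 1) → M} {v : Fin k → M}
    (h : ∀ j, f j.castSucc + v j = f j.succ) (t : Fin (k + 1)) : f t = f 0 + partialSum v t := by
  induction t using Fin.induction with
  | zero => simp
  | succ j ih => rw [partialSum_succ, ← add_assoc, ← ih, h]

end Fin

theorem Finset.sum_card_filter_eq_mul_eq_sum {ι : Type*} [Fintype ι] (g : ι → ℕ) {t : Finset ℕ}
    (hg : ∀ i, g i ∈ t) : ∑ j ∈ t, #{i | g i = j} * j = ∑ i, g i := by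
  rw [← sum_fiberwise_of_maps_to (fun i _ => hg i)]
  refine sum_congr rfl fun j _ => ?_
  rw [sum_const_nat]
  simp

namespace Matrix

variable {n R : Type*} [Fintype n] [DecidableEq n] [Semiring R]

theorem single_mul_prod_ofFn_single_chain {k : ℕ} (c : Fin (k + 1) → n) (i : n) (r : R) :
    single i (c 0) r * (List.ofFn fun j : Fin k => single (c j.castSucc) (c j.succ) (1 : R)).prod
      = single i (c (Fin.last k)) r := by
  induction k generalizing i with
  | zero => simp
  | succ k ih =>
    have := ih (fun t => c t.castSucc) i
    rw [Fin.castSucc_zero] at this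
    rw [List.ofFn_succ', List.prod_concat, ← mul_assoc]
    simp only [← Fin.succ_castSucc] at this ⊢
    rw [this, single_mul_single_same, mul_one, Fin.succ_last]

-- The left factor `single x y` pins down the start `y` of the chain, which an empty product
-- alone would leave undetermined; this is what makes the induction go through.
theorem exists_chain_of_single_mul_prod_ofFn_single_ne_zero {k : ℕ} (a b : Fin k → n) (x y : n)
    (h : single x y (1 : R) * (List.ofFn fun j => single (a j) (b j) (1 : R)).prod ≠ 0) :
    ∃ c : Fin (k + 1) → n, c 0 = y ∧ a = c ∘ Fin.castSucc ∧ b = c ∘ Fin.succ := by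
  induction k generalizing y with
  | zero => exact ⟨fun _ => y, rfl, funext fun j => j.elim0, funext fun j => j.elim0⟩
  | succ k ih =>
    rw [List.ofFn_succ, List.prod_cons, ← mul_assoc] at h
    have hy : y = a 0 := by
      by_contra hne
      exact h (by rw [single_mul_single_of_ne (1 : R) x y (a 0) hne, zero_mul])
    rw [hy, single_mul_single_same, one_mul] at h
    obtain ⟨c, hc0, hac, hbc⟩ := ih (a ∘ Fin.succ) (b ∘ Fin.succ) (b 0) h
    refine ⟨Fin.cons y c, rfl, funext fun j => ?_, funext fun j => ?_⟩
    · cases j using Fin.cases with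
      | zero => simp [hy]
      | succ j => simpa [← Fin.succ_castSucc] using congrFun hac j
    · cases j using Fin.cases with
      | zero => simp [hc0]
      | succ j => simpa using congrFun hbc j

theorem prod_ofFn_single_ne_zero_iff [Nontrivial R] {k : ℕ} (a b : Fin k → n) :
    (List.ofFn fun j => single (a j) (b j) (1 : R)).prod ≠ 0 ↔
      ∃ c : Fin (k + 1) → n, a = c ∘ Fin.castSucc ∧ b = c ∘ Fin.succ := by
  constructor
  · intro h
    obtain ⟨y, z, hyz⟩ : ∃ y z, (List.ofFn fun j => single (a j) (b j) (1 : R)).prod y z ≠ 0 := by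
      by_contra! h0
      exact h (Matrix.ext h0)
    obtain ⟨c, -, hc⟩ := exists_chain_of_single_mul_prod_ofFn_single_ne_zero a b y y
      (R := R) fun h0 => hyz (by simpa using congrFun (congrFun h0 y) z)
    exact ⟨c, hc⟩
  · rintro ⟨c, rfl, rfl⟩ h
    have := single_mul_prod_ofFn_single_chain c (c 0) (1 : R)
    simp only [Function.comp_apply] at h
    rw [h, mul_zero] at this
    exact absurd (congrFun (congrFun this (c 0)) (c (Fin.last k))) (by simp)

end Matrix

theorem ZMod.sum_card_filter_eq_mul_eq_sum_val {m : ℕ} [NeZero m] {ι : Type*} [Fintype ι]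
    {α : ι → ZMod m} (hα : ∀ i, α i ≠ 0) :
    ∑ j ∈ Icc 1 (m - 1), #{i | α i = (j : ZMod m)} * j = ∑ i, (α i).val := by
  have hval : ∀ i, (α i).val ∈ Icc 1 (m - 1) := fun i =>
    mem_Icc.2 ⟨ZMod.val_pos.2 (hα i), Nat.le_sub_one_of_lt (ZMod.val_lt (α i))⟩
  rw [← sum_card_filter_eq_mul_eq_sum _ hval]
  refine sum_congr rfl fun j hj => ?_
  have hjm : j < m := by obtain ⟨h1, h2⟩ := mem_Icc.1 hj; omega
  congr 3
  ext i
  constructor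
  · intro h
    rw [h, ZMod.val_cast_of_lt hjm]
  · intro h
    rw [← h, ZMod.natCast_zmod_val]

-- Truncated subtraction makes this the tuple `(0, 0, 1, …, m-2)`.
def gradingTuple (m : ℕ) (i : Fin m) : ZMod m := ((i - 1 : ℕ) : ZMod m)

section Chain

variable {m k : ℕ} {α : Fin k → ZMod m}

theorem sum_val_le_of_chain {c : Fin (k + 1) → Fin m} (hc : ∀ j : Fin k, c j.castSucc ≤ c j.succ)
    (hα : ∀ j : Fin k, α j = gradingTuple m (c j.succ) - gradingTuple m (c j.castSucc)) :
    ∑ j, (α j).val ≤ m - 2 := by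
  let f : Fin (k + 1) → ℕ := fun t => (c t : ℕ) - 1
  have hf : ∀ t, f t ≤ m - 2 := fun t => by
    have := (c t).isLt
    show (c t : ℕ) - 1 ≤ m - 2
    omega
  have hstep : ∀ j, f j.castSucc + (α j).val = f j.succ := by
    intro j
    have hle : f j.castSucc ≤ f j.succ := Nat.sub_le_sub_right (hc j) 1
    have hlt : f j.succ - f j.castSucc < m :=
      (Nat.sub_le _ _).trans_lt ((Nat.sub_le _ _).trans_lt (c j.succ).isLt)
    rw [hα j, gradingTuple, gradingTuple, ← Nat.cast_sub hle, ZMod.val_cast_of_lt hlt]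
    omega
  have hlast := Fin.eq_add_partialSum_of_add_eq hstep (Fin.last k)
  rw [Fin.partialSum_last] at hlast
  have := hf (Fin.last k)
  omega

theorem exists_chain_of_sum_val_le (hm : 2 ≤ m) (hα : ∀ j, α j ≠ 0) (h : ∑ j, (α j).val ≤ m - 2) :
    ∃ c : Fin (k + 1) → Fin m, (∀ j : Fin k, c j.castSucc < c j.succ) ∧
      ∀ j : Fin k, α j = gradingTuple m (c j.succ) - gradingTuple m (c j.castSucc) := by
  have : NeZero m := ⟨by omega⟩
  let v : Fin k → ℕ := fun j => (α j).val
  have hlt : ∀ t, Fin.partialSum v t + 1 < m := fun t => by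
    have := Fin.partialSum_le_sum (fun j => Nat.zero_le (v j)) t
    have hv : ∑ j, v j ≤ m - 2 := h
    omega
  refine ⟨fun t => ⟨Fin.partialSum v t + 1, hlt t⟩, fun j => ?_, fun j => ?_⟩
  · rw [Fin.lt_def]
    simp only [Fin.partialSum_succ]
    exact Nat.add_lt_add_right (Nat.lt_add_of_pos_right (ZMod.val_pos.2 (hα j))) 1
  · simp [gradingTuple, Fin.partialSum_succ, v]

end Chain

/-- Characterization of good sequences for the elementary `ℤ_m`-grading on `UT_m(F)`
induced by `φ = (0,0,1,…,m-2)`: a sequence `α` of nonzero elements of `ℤ_m` is good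
(realizable by strictly upper-triangular matrix units with nonzero product and the
prescribed degrees) iff `∑_{j=1}^{m-1} μ_j · j ≤ m-2`, where `μ_j` is the number of
entries of `α` equal to `j`. -/
theorem stmt4 (m : ℕ) (hm : 2 ≤ m) (F : Type) [Field F] (k : ℕ)
    (α : Fin k → ZMod m) (hα : ∀ i, α i ≠ 0) :
    let φ : Fin m → ZMod m := fun i => if (i : ℕ) = 0 then 0 else (((i : ℕ) - 1 : ℕ) : ZMod m)
    ((∃ a b : Fin k → Fin m,
        (∀ i, a i < b i) ∧
        (List.ofFn (fun i => Matrix.single (a i) (b i) (1 : F))).prod ≠ 0 ∧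
        (∀ i, α i = φ (b i) - φ (a i))) ↔
      ∑ j ∈ Finset.Icc 1 (m - 1),
          (Finset.univ.filter (fun i : Fin k => α i = (j : ZMod m))).card * j ≤ m - 2) := by
  intro φ
  have hφ : φ = gradingTuple m := funext fun i => by
    by_cases hi : (i : ℕ) = 0 <;> simp [φ, gradingTuple, hi]
  have : NeZero m := ⟨by omega⟩
  rw [hφ]
  rw [ZMod.sum_card_filter_eq_mul_eq_sum_val hα]
  constructor
  · rintro ⟨a, b, hab, hprod, hdeg⟩
    obtain ⟨c, rfl, rfl⟩ := (Matrix.prod_ofFn_single_ne_zero_iff a b).1 hprod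
    exact sum_val_le_of_chain (fun j => (hab j).le) hdeg
  · intro h
    obtain ⟨c, hc, hdeg⟩ := exists_chain_of_sum_val_le hm hα h
    exact ⟨c ∘ Fin.castSucc, c ∘ Fin.succ, hc,
      (Matrix.prod_ofFn_single_ne_zero_iff _ _).2 ⟨c, rfl, rfl⟩, hdeg⟩
end

section
/- In the algebra UT_m(F) of m×m upper-triangular matrices over a field F with an elementary Z_m-grading induced by any m-tuple of the form (0, 0, g_3, ..., g_m), for every homogeneous element z of nonzero degree and all elements y_1, y_2 of degree 0, one has z · (y_1 y_2 - y_2 y_1) = 0. -/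
/-!
A degree-`d` element of the elementary grading can only have nonzero entries at positions
`(i, j)` with `i ≤ j` and `g j - g i = d`. For `d ≠ 0` this excludes the whole first column,
and for the tuple `(0, 0, g₃, …, g_m)` it leaves, for `d = 0`, only the diagonal and `e₁₂`.
Hence degree-zero elements are of the form `D + a e₁₂` with `D` diagonal, their commutators
are multiples of `e₁₂`, and `z e₁₂ = 0` because the first column of `z` vanishes.
-/

open Matrix

namespace Matrix

variable {n R : Type*} [DecidableEq n] {p q : n}

theorem eq_diagonal_add_single [AddZeroClass R] {y : Matrix n n R} (hpq : p ≠ q)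
    (hy : ∀ k l, k ≠ l → ¬(k = p ∧ l = q) → y k l = 0) :
    y = diagonal y.diag + single p q (y p q) := by
  ext k l
  by_cases hkl : k = l
  · subst hkl
    simp [single_apply_of_ne _ _ _ _ _ fun h : p = k ∧ q = k => hpq (h.1.trans h.2.symm)]
  by_cases hpq' : k = p ∧ l = q
  · obtain ⟨rfl, rfl⟩ := hpq'
    simp [hkl]
  · simp [hkl, single_apply_of_ne _ _ _ _ _ (by tauto : ¬(p = k ∧ q = l)), hy k l hkl hpq']

variable [Fintype n]

theorem diagonal_mul_single [NonUnitalNonAssocSemiring R] (d : n → R) (a : R) :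
    diagonal d * single p q a = single p q (d p * a) := by
  ext k l
  by_cases h : p = k ∧ q = l
  · obtain ⟨rfl, rfl⟩ := h
    simp
  · simp [single_apply_of_ne _ _ _ _ _ h]

theorem single_mul_diagonal [NonUnitalNonAssocSemiring R] (d : n → R) (a : R) :
    single p q a * diagonal d = single p q (a * d q) := by
  ext k l
  by_cases h : p = k ∧ q = l
  · obtain ⟨rfl, rfl⟩ := h
    simp [mul_diagonal]
  · simp [mul_diagonal, single_apply_of_ne _ _ _ _ _ h]

theorem commutator_diagonal_add_single [CommRing R] (hpq : p ≠ q) (d₁ d₂ : n → R) (a b : R) :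
    (diagonal d₁ + single p q a) * (diagonal d₂ + single p q b) -
        (diagonal d₂ + single p q b) * (diagonal d₁ + single p q a) =
      single p q ((d₁ p - d₁ q) * b - (d₂ p - d₂ q) * a) := by
  simp only [add_mul, mul_add, diagonal_mul_single, single_mul_diagonal, diagonal_mul_diagonal,
    single_mul_single_of_ne _ _ _ _ hpq.symm]
  ext k l
  simp only [sub_apply, add_apply, single_apply, diagonal_apply]
  split_ifs <;> ring

theorem mul_single_eq_zero [NonUnitalNonAssocSemiring R] {z : Matrix n n R}
    (hz : ∀ k, z k p = 0) (c : R) : z * single p q c = 0 := by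
  ext k l
  by_cases hl : l = q
  · subst hl
    simp [hz]
  · simp [mul_single_apply_of_ne _ _ _ _ _ hl]

end Matrix

section ElementaryGrading

variable {n G : Type*} (R : Type*) [Semiring R] [DecidableEq n]

def elementaryComponent [LE n] [Sub G] (g : n → G) (d : G) : Submodule R (Matrix n n R) :=
  Submodule.span R {A | ∃ i j : n, i ≤ j ∧ g j - g i = d ∧ A = single i j 1}

variable {R}

theorem apply_eq_zero_of_mem_elementaryComponent [LE n] [Sub G] {g : n → G} {d : G}
    {A : Matrix n n R} (hA : A ∈ elementaryComponent R g d) {k l : n}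
    (hkl : ¬(k ≤ l ∧ g l - g k = d)) : A k l = 0 := by
  have hle : elementaryComponent R g d ≤ LinearMap.ker (entryLinearMap R R k l) := by
    refine Submodule.span_le.2 ?_
    rintro _ ⟨i, j, hij, hdeg, rfl⟩
    refine single_apply_of_ne _ _ _ _ _ ?_
    rintro ⟨rfl, rfl⟩
    exact hkl ⟨hij, hdeg⟩
  exact hle hA

theorem apply_isMin_eq_zero_of_mem_elementaryComponent [PartialOrder n] [AddGroup G]
    {g : n → G} {d : G} (hd : d ≠ 0) {A : Matrix n n R} (hA : A ∈ elementaryComponent R g d)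
    {i₀ : n} (hi₀ : IsMin i₀) (k : n) : A k i₀ = 0 := by
  refine apply_eq_zero_of_mem_elementaryComponent hA ?_
  rintro ⟨hk, hdeg⟩
  rw [le_antisymm hk (hi₀ hk), sub_self] at hdeg
  exact hd hdeg.symm

end ElementaryGrading

section TupleZeroZero

variable {m : ℕ} {G : Type*} [AddGroup G] {g : Fin m → G}

theorem val_eq_zero_and_val_eq_one_of_lt_of_apply_eq (hm : 2 ≤ m)
    (h0 : g ⟨0, Nat.zero_lt_of_lt hm⟩ = 0) (h1 : g ⟨1, hm⟩ = 0)
    (hinj : ∀ i j : Fin m, 2 ≤ (i : ℕ) → 2 ≤ (j : ℕ) → g i = g j → i = j)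
    (hne : ∀ i : Fin m, 2 ≤ (i : ℕ) → g i ≠ 0) {k l : Fin m} (hkl : k < l) (hg : g l = g k) :
    (k : ℕ) = 0 ∧ (l : ℕ) = 1 := by
  have hlow : ∀ i : Fin m, (i : ℕ) < 2 → g i = 0 := by
    intro i hi
    obtain h | h : (i : ℕ) = 0 ∨ (i : ℕ) = 1 := by omega
    · rwa [show i = ⟨0, Nat.zero_lt_of_lt hm⟩ from Fin.ext h]
    · rwa [show i = ⟨1, hm⟩ from Fin.ext h]
  have hkl' : (k : ℕ) < l := hkl
  by_cases hk : 2 ≤ (k : ℕ)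
  · exact absurd (hinj l k (by omega) hk hg) hkl.ne'
  by_cases hl : 2 ≤ (l : ℕ)
  · exact absurd (hg.trans (hlow k (by omega))) (hne l hl)
  omega

theorem apply_eq_zero_of_mem_elementaryComponent_zero {R : Type*} [Semiring R] (hm : 2 ≤ m)
    (h0 : g ⟨0, Nat.zero_lt_of_lt hm⟩ = 0) (h1 : g ⟨1, hm⟩ = 0)
    (hinj : ∀ i j : Fin m, 2 ≤ (i : ℕ) → 2 ≤ (j : ℕ) → g i = g j → i = j)
    (hne : ∀ i : Fin m, 2 ≤ (i : ℕ) → g i ≠ 0) {A : Matrix (Fin m) (Fin m) R}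
    (hA : A ∈ elementaryComponent R g 0) {k l : Fin m} (hkl : k ≠ l)
    (h01 : ¬(k = ⟨0, Nat.zero_lt_of_lt hm⟩ ∧ l = ⟨1, hm⟩)) : A k l = 0 := by
  refine apply_eq_zero_of_mem_elementaryComponent hA ?_
  rintro ⟨hle, hdeg⟩
  obtain ⟨hk, hl⟩ := val_eq_zero_and_val_eq_one_of_lt_of_apply_eq hm h0 h1 hinj hne
    (lt_of_le_of_ne hle hkl) (sub_eq_zero.1 hdeg)
  exact h01 ⟨Fin.ext hk, Fin.ext hl⟩

end TupleZeroZero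

/-- For `UT_m(F)` with an elementary `ℤ_m`-grading induced by an `m`-tuple of the form
`(0,0,g₃,…,g_m)` with `g₃,…,g_m` pairwise distinct and nonzero, `z·[y₁,y₂] = 0` for every
homogeneous `z` of nonzero degree and all `y₁, y₂` of degree 0. -/
theorem stmt6 (m : ℕ) (hm : 2 ≤ m) (F : Type) [Field F] (g : Fin m → ZMod m)
    (h0 : g ⟨0, by omega⟩ = 0) (h1 : g ⟨1, by omega⟩ = 0)
    (hinj : ∀ i j : Fin m, 2 ≤ (i : ℕ) → 2 ≤ (j : ℕ) → g i = g j → i = j)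
    (hne : ∀ i : Fin m, 2 ≤ (i : ℕ) → g i ≠ 0) :
    let comp : ZMod m → Submodule F (Matrix (Fin m) (Fin m) F) := fun d =>
      Submodule.span F
        {A | ∃ i j : Fin m, i ≤ j ∧ g j - g i = d ∧ A = Matrix.single i j 1}
    ∀ d : ZMod m, d ≠ 0 → ∀ z ∈ comp d, ∀ y1 ∈ comp 0, ∀ y2 ∈ comp 0,
      z * (y1 * y2 - y2 * y1) = 0 := by
  intro comp d hd z hz y1 hy1 y2 hy2
  have h01 : (⟨0, Nat.zero_lt_of_lt hm⟩ : Fin m) ≠ ⟨1, hm⟩ := by simp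
  have hdecomp (y) (hy : y ∈ comp 0) := eq_diagonal_add_single h01 fun _ _ =>
    apply_eq_zero_of_mem_elementaryComponent_zero hm h0 h1 hinj hne hy
  rw [hdecomp y1 hy1, hdecomp y2 hy2, commutator_diagonal_add_single h01]
  exact mul_single_eq_zero
    (apply_isMin_eq_zero_of_mem_elementaryComponent hd hz fun _ _ => Nat.zero_le _) _
end

section
/- In the algebra UT_4(F) of 4×4 upper-triangular matrices over a field F, graded by Z_4 via the elementary grading induced by (0,0,1,2), the following are identities: for all homogeneous elements z of degree 1, t, t_1, t_2 of degree 2, and y_1,...,y_4 of degree 0: (a) (y_1 y_2 - y_2 y_1)(y_3 y_4 - y_4 y_3) = 0; (b) z·t = 0; (c) t_1·t_2 = 0; (d) the product of any three degree-1 elements z_1 z_2 z_3 = 0; (e) t·(y_1 y_2 - y_2 y_1) = 0. -/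
/-!
Every homogeneous component of the grading consists of the matrices supported on a fixed set of
positions `(i, j)` with `i ≤ j`, and supports compose like relations under multiplication. A
commutator of degree-0 elements also has zero diagonal, since the diagonal of a product of upper
triangular matrices is the product of the diagonals; so it is a multiple of `e₁₂`. Each identity
then reduces to the emptiness of a composite of finite relations on `Fin 4`, which is decidable.
-/

namespace Matrix

variable {n R : Type*}

def supportedOn [Semiring R] (r : n → n → Prop) : Submodule R (Matrix n n R) where
  carrier := {A | ∀ i j, ¬ r i j → A i j = 0}
  add_mem' hA hB i j hij := by rw [add_apply, hA i j hij, hB i j hij, add_zero]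
  zero_mem' _ _ _ := rfl
  smul_mem' c A hA i j hij := by rw [smul_apply, hA i j hij, smul_zero]

section Semiring

variable [Semiring R] {r s : n → n → Prop} {A B : Matrix n n R}

theorem single_mem_supportedOn [DecidableEq n] {i j : n} (h : r i j) (c : R) :
    single i j c ∈ supportedOn r := fun k l hkl =>
  single_apply_of_ne i j c k l fun ⟨hk, hl⟩ => hkl (hk ▸ hl ▸ h)

theorem eq_zero_of_mem_supportedOn (hA : A ∈ supportedOn r) (hr : ∀ i j, ¬ r i j) : A = 0 :=
  ext fun i j => hA i j (hr i j)

theorem mul_mem_supportedOn [Fintype n] (hA : A ∈ supportedOn r) (hB : B ∈ supportedOn s) :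
    A * B ∈ supportedOn (Relation.Comp r s) := by
  intro i k hik
  rw [mul_apply]
  refine Finset.sum_eq_zero fun j _ => ?_
  by_cases hij : r i j
  · rw [hB j k fun hjk => hik ⟨j, hij, hjk⟩, mul_zero]
  · rw [hA i j hij, zero_mul]

theorem mul_apply_self_of_mem_supportedOn [Fintype n] [PartialOrder n]
    (hr : ∀ i j, r i j → i ≤ j) (hA : A ∈ supportedOn r) (hB : B ∈ supportedOn r) (i : n) :
    (A * B) i i = A i i * B i i := by
  rw [mul_apply]
  refine Finset.sum_eq_single i (fun j _ hji => ?_) (by simp)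
  by_cases hij : r i j
  · rw [hB j i fun hji' => hji (le_antisymm (hr j i hji') (hr i j hij)), mul_zero]
  · rw [hA i j hij, zero_mul]

end Semiring

theorem commutator_mem_supportedOn [CommRing R] [Fintype n] [PartialOrder n]
    {r : n → n → Prop} {A B : Matrix n n R} (hr : ∀ i j, r i j → i ≤ j)
    (hA : A ∈ supportedOn r) (hB : B ∈ supportedOn r) :
    A * B - B * A ∈ supportedOn (fun i k => Relation.Comp r r i k ∧ i ≠ k) := by
  intro i k hik
  rw [sub_apply]
  by_cases hcomp : Relation.Comp r r i k
  · obtain rfl : i = k := by simpa [hcomp] using hik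
    rw [mul_apply_self_of_mem_supportedOn hr hA hB,
      mul_apply_self_of_mem_supportedOn hr hB hA, mul_comm, sub_self]
  · rw [mul_mem_supportedOn hA hB i k hcomp, mul_mem_supportedOn hB hA i k hcomp, sub_zero]

end Matrix

open Matrix

abbrev elementaryGradingSupport {n G : Type*} [LE n] [AddGroup G] (φ : n → G) (g : G)
    (i j : n) : Prop :=
  i ≤ j ∧ φ j - φ i = g

/-- In `UT_4(F)` with the elementary `ℤ_4`-grading induced by `(0,0,1,2)`:
degree-0 component is spanned by the diagonal units and `e12`, degree-1 by
`e13, e23, e34`, degree-2 by `e14, e24` (all written 0-based below). -/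
theorem stmt7 (F : Type) [Field F] :
    let E : Fin 4 → Fin 4 → Matrix (Fin 4) (Fin 4) F := fun i j => Matrix.single i j 1
    let D0 : Submodule F (Matrix (Fin 4) (Fin 4) F) :=
      Submodule.span F {E 0 0, E 1 1, E 2 2, E 3 3, E 0 1}
    let D1 : Submodule F (Matrix (Fin 4) (Fin 4) F) := Submodule.span F {E 0 2, E 1 2, E 2 3}
    let D2 : Submodule F (Matrix (Fin 4) (Fin 4) F) := Submodule.span F {E 0 3, E 1 3}
    (∀ y1 ∈ D0, ∀ y2 ∈ D0, ∀ y3 ∈ D0, ∀ y4 ∈ D0,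
      (y1 * y2 - y2 * y1) * (y3 * y4 - y4 * y3) = 0) ∧
    (∀ z ∈ D1, ∀ t ∈ D2, z * t = 0) ∧
    (∀ t1 ∈ D2, ∀ t2 ∈ D2, t1 * t2 = 0) ∧
    (∀ z1 ∈ D1, ∀ z2 ∈ D1, ∀ z3 ∈ D1, z1 * z2 * z3 = 0) ∧
    (∀ t ∈ D2, ∀ y1 ∈ D0, ∀ y2 ∈ D0, t * (y1 * y2 - y2 * y1) = 0) := by
  intro E D0 D1 D2
  let S : ZMod 4 → Fin 4 → Fin 4 → Prop := elementaryGradingSupport ![0, 0, 1, 2]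
  obtain ⟨h0, h1, h2⟩ :
      D0 ≤ supportedOn (S 0) ∧ D1 ≤ supportedOn (S 1) ∧ D2 ≤ supportedOn (S 2) := by
    simp only [D0, D1, D2, Submodule.span_le, Set.insert_subset_iff, Set.singleton_subset_iff,
      SetLike.mem_coe]
    and_intros <;> exact single_mem_supportedOn (by decide) 1
  have hcomm {y1 y2} (hy1 : y1 ∈ D0) (hy2 : y2 ∈ D0) :
      y1 * y2 - y2 * y1 ∈ supportedOn (fun i k => Relation.Comp (S 0) (S 0) i k ∧ i ≠ k) :=
    commutator_mem_supportedOn (fun _ _ h => h.1) (h0 hy1) (h0 hy2)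
  refine ⟨fun y1 hy1 y2 hy2 y3 hy3 y4 hy4 => ?_, fun z hz t ht => ?_, fun t1 ht1 t2 ht2 => ?_,
    fun z1 hz1 z2 hz2 z3 hz3 => ?_, fun t ht y1 hy1 y2 hy2 => ?_⟩
  · exact eq_zero_of_mem_supportedOn (mul_mem_supportedOn (hcomm hy1 hy2) (hcomm hy3 hy4))
      (by unfold Relation.Comp; decide)
  · exact eq_zero_of_mem_supportedOn (mul_mem_supportedOn (h1 hz) (h2 ht))
      (by unfold Relation.Comp; decide)
  · exact eq_zero_of_mem_supportedOn (mul_mem_supportedOn (h2 ht1) (h2 ht2))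
      (by unfold Relation.Comp; decide)
  · exact eq_zero_of_mem_supportedOn
      (mul_mem_supportedOn (mul_mem_supportedOn (h1 hz1) (h1 hz2)) (h1 hz3))
      (by unfold Relation.Comp; decide)
  · exact eq_zero_of_mem_supportedOn (mul_mem_supportedOn (h2 ht) (hcomm hy1 hy2))
      (by unfold Relation.Comp; decide)
end

section
/- Let F be a field of characteristic 0 and A any unital F-algebra. For any n ≥ 2, any elements z, y_1, ..., y_n ∈ A, and any permutation σ of {1,...,n}: [z, y_{σ(1)}, ..., y_{σ(n)}] - [z, y_1, ..., y_n] lies in the two-sided span of elements of the form [y_{i_1},...,y_{i_s}] · [z, y_{j_1},...,y_{j_t}] and [z, y_{j_1},...,y_{j_t}] · [y_{i_1},...,y_{i_s}] with s ≥ 2 and s + t ≤ n. Here [a,b] = ab - ba and [a_1,...,a_k] denotes the left-normed iterated commutator [[...[a_1,a_2],...],a_k]. -/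
/-- `comm a b = [a,b] = ab - ba`. -/
def comm9 {A : Type*} [Ring A] (a b : A) : A := a * b - b * a

/-- Left-normed iterated commutator `[a, l₁, l₂, …]`. -/
def lcomm9 {A : Type*} [Ring A] (a : A) (l : List A) : A := l.foldl comm9 a

/-!
Transposing two adjacent entries `a, b` of `[z, y₁, …]` after a prefix with value `w` replaces
`[w, a, b, l…]` by `[w, b, a, l…]`; by the Jacobi identity the difference is `[w·c − c·w, l…]`
with `c = [a, b]`, and the Leibniz rule expands `[w·c, l…]` and `[c·w, l…]` into products of
`[c, l₁…]` and `[z, prefix, l₂…]` where `l₁, l₂` split `l`. Every permutation is a product of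
adjacent transpositions, and the degrees never exceed `n`.
-/

section LeftNormedCommutator

variable {A : Type*} [Ring A]

theorem lcomm9_cons (a b : A) (l : List A) : lcomm9 a (b :: l) = lcomm9 (comm9 a b) l := rfl

theorem lcomm9_append (a : A) (l₁ l₂ : List A) :
    lcomm9 a (l₁ ++ l₂) = lcomm9 (lcomm9 a l₁) l₂ :=
  List.foldl_append ..

theorem lcomm9_add (l : List A) (a b : A) : lcomm9 (a + b) l = lcomm9 a l + lcomm9 b l := by
  induction l generalizing a b with
  | nil => rfl
  | cons c l ih =>
    rw [lcomm9_cons, show comm9 (a + b) c = comm9 a c + comm9 b c by unfold comm9; noncomm_ring,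
      ih]
    rfl

theorem lcomm9_sub (l : List A) (a b : A) : lcomm9 (a - b) l = lcomm9 a l - lcomm9 b l :=
  eq_sub_of_add_eq (by rw [← lcomm9_add, sub_add_cancel])

theorem lcomm9_mul_mem {ι : Type*} (y : ι → A) (M : AddSubmonoid A) (t : List ι) (u v : A)
    (h : ∀ t₁ t₂ : List ι, t₁.length + t₂.length = t.length →
      lcomm9 u (t₁.map y) * lcomm9 v (t₂.map y) ∈ M) :
    lcomm9 (u * v) (t.map y) ∈ M := by
  induction t generalizing u v with
  | nil => exact h [] [] rfl
  | cons r t ih =>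
    have leibniz : comm9 (u * v) (y r) = u * comm9 v (y r) + comm9 u (y r) * v := by
      unfold comm9; noncomm_ring
    rw [List.map_cons, lcomm9_cons, leibniz, lcomm9_add]
    refine add_mem (ih _ _ fun t₁ t₂ ht => ?_) (ih _ _ fun t₁ t₂ ht => ?_)
    · simpa [lcomm9_cons] using h t₁ (r :: t₂) (by simp [← ht]; omega)
    · simpa [lcomm9_cons] using h (r :: t₁) t₂ (by simp [← ht]; omega)

theorem lcomm9_swap_sub (z a b : A) (p l : List A) :
    lcomm9 z (p ++ a :: b :: l) - lcomm9 z (p ++ b :: a :: l) =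
      lcomm9 (lcomm9 z p * comm9 a b) l - lcomm9 (comm9 a b * lcomm9 z p) l := by
  simp only [lcomm9_append, lcomm9_cons, ← lcomm9_sub]
  congr 1
  unfold comm9
  noncomm_ring

end LeftNormedCommutator

section Reordering

variable {ι A : Type*} [Ring A]

def correctionTerms (z : A) (y : ι → A) (N : ℕ) : Set A :=
  {x | ∃ (a b : ι) (l1 l2 : List ι), 2 + l1.length + l2.length ≤ N ∧
    (x = lcomm9 (comm9 (y a) (y b)) (l1.map y) * lcomm9 z (l2.map y) ∨
     x = lcomm9 z (l2.map y) * lcomm9 (comm9 (y a) (y b)) (l1.map y))}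

theorem lcomm9_swap_sub_mem (z : A) (y : ι → A) {N : ℕ} (a b : ι) (p l : List ι)
    (hN : p.length + l.length + 2 ≤ N) :
    lcomm9 z ((p ++ a :: b :: l).map y) - lcomm9 z ((p ++ b :: a :: l).map y) ∈
      AddSubgroup.closure (correctionTerms z y N) := by
  have prefix_eq (t : List ι) : lcomm9 (lcomm9 z (p.map y)) (t.map y) =
      lcomm9 z ((p ++ t).map y) := by
    rw [List.map_append, lcomm9_append]
  simp only [List.map_append, List.map_cons]
  rw [lcomm9_swap_sub]
  refine sub_mem (lcomm9_mul_mem y _ l _ _ fun t₁ t₂ ht => ?_)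
    (lcomm9_mul_mem y _ l _ _ fun t₁ t₂ ht => ?_)
  · rw [prefix_eq]
    exact AddSubgroup.subset_closure ⟨a, b, t₂, p ++ t₁, by simp; omega, Or.inr rfl⟩
  · rw [prefix_eq]
    exact AddSubgroup.subset_closure ⟨a, b, t₁, p ++ t₂, by simp; omega, Or.inl rfl⟩

theorem lcomm9_perm_sub_mem (z : A) (y : ι → A) {N : ℕ} {l l' : List ι} (h : l.Perm l')
    (p : List ι) (hN : p.length + l.length ≤ N) :
    lcomm9 z ((p ++ l').map y) - lcomm9 z ((p ++ l).map y) ∈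
      AddSubgroup.closure (correctionTerms z y N) := by
  induction h generalizing p with
  | nil => simp
  | cons c _ ih =>
    simpa using ih (p ++ [c]) (by simp at hN ⊢; omega)
  | swap a b l =>
    exact lcomm9_swap_sub_mem z y a b p l (by simpa [add_assoc] using hN)
  | trans h₁ _ ih₁ ih₂ =>
    simpa using add_mem (ih₂ p (h₁.length_eq ▸ hN)) (ih₁ p hN)

end Reordering

theorem stmt9_general (F A : Type) [Field F] [Ring A] [Algebra F A]
    (n : ℕ) (z : A) (y : Fin n → A) (σ : Equiv.Perm (Fin n)) :
    lcomm9 z (List.ofFn (fun i => y (σ i))) - lcomm9 z (List.ofFn y) ∈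
      Submodule.span F {x : A | ∃ (a b : Fin n) (l1 l2 : List (Fin n)),
        2 + l1.length + l2.length ≤ n ∧
        (x = lcomm9 (comm9 (y a) (y b)) (l1.map y) * lcomm9 z (l2.map y) ∨
         x = lcomm9 z (l2.map y) * lcomm9 (comm9 (y a) (y b)) (l1.map y))} := by
  have h := lcomm9_perm_sub_mem z y (N := n) σ.map_finRange_perm.symm [] (by simp)
  rw [List.nil_append, List.nil_append, List.map_map] at h
  rw [List.ofFn_eq_map, List.ofFn_eq_map]
  exact (Submodule.span F (correctionTerms z y n)).toAddSubgroup.closure_le.mpr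
    Submodule.subset_span h

/-- Reordering the `y`-entries of a long left-normed commutator `[z, y₁, …, yₙ]` changes it
only by a linear combination of products (in either order) of a pure-`y` commutator of length
`s ≥ 2` with a `z`-leading commutator, of total degree `s + t ≤ n`. -/
theorem stmt9 (F A : Type) [Field F] [CharZero F] [Ring A] [Algebra F A]
    (n : ℕ) (hn : 2 ≤ n) (z : A) (y : Fin n → A) (σ : Equiv.Perm (Fin n)) :
    lcomm9 z (List.ofFn (fun i => y (σ i))) - lcomm9 z (List.ofFn y) ∈
      Submodule.span F {x : A | ∃ (a b : Fin n) (l1 l2 : List (Fin n)),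
        2 + l1.length + l2.length ≤ n ∧
        (x = lcomm9 (comm9 (y a) (y b)) (l1.map y) * lcomm9 z (l2.map y) ∨
         x = lcomm9 z (l2.map y) * lcomm9 (comm9 (y a) (y b)) (l1.map y))} :=
  stmt9_general F A n z y σ
end
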